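/- Let D = A_{3,−1,1} = {(x₁,x₂) ∈ ℝ² : x₂ > x₁³}. Then every harmonic map f = (u,v): ℂ → ℝ² whose image is contained in D is constant. (Equivalently, the tube domain T_D is Brody-hyperbolic: every holomorphic map ℂ → T_D is constant.) -/

import Mathlib

open Complex Metric Set Filter Topology

/-- The Laplacian of `u : ℂ → ℝ`, as the sum of the second directional derivatives
in the directions `1` and `I`. -/
noncomputable def laplacian (u : ℂ → ℝ) (z : ℂ) : ℝ :=
  fderiv ℝ (fun w => fderiv ℝ u w 1) z 1 +
    fderiv ℝ (fun w => fderiv ℝ u w Complex.I) z Complex.I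

/-- A real-valued function is harmonic on a set if it is `C²` there and its
Laplacian vanishes there. -/
def HarmonicOn (u : ℂ → ℝ) (s : Set ℂ) : Prop :=
  ContDiffOn ℝ 2 u s ∧ ∀ z ∈ s, laplacian u z = 0

/-- A map `f = (u, v) : ℂ → ℝ²` is a harmonic map on a set if both components
are harmonic there. -/
def HarmonicMapOn (f : ℂ → ℝ × ℝ) (s : Set ℂ) : Prop :=
  HarmonicOn (fun z => (f z).1) s ∧ HarmonicOn (fun z => (f z).2) s

/-! Write `u = Re F` and `v = Re G` with `F`, `G` entire. If `u` is not constant, pick `a`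
strictly between two of its values and a disc `B(c, ρ)` on which `u < a`. For every `n`, the
harmonic function `h = v - n (u - a) - a³` is nonnegative where `u = a` and, because `v > u³`,
bounded below on `{u ≥ a}`. The plane minus a disc is parabolic, so `h ≥ 0` on `{u > a}`: the
maximum modulus principle for `exp (-k H) / (z - c)` with `Re H = h` on `{u > a} ∩ B(c, K)`,
`K` large, beats the slow growth of `log |z - c|`. Hence `n (u(p) - a) ≤ v(p) - a³` for every
`n`, which is absurd where `u(p) > a`. Once `u` is constant, `v` is bounded below and the same
argument applies to the pair `(m - v, v - m)`. -/

open scoped Laplacian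

theorem laplacian_eq_of_contDiffAt {u : ℂ → ℝ} {z : ℂ} (hu : ContDiffAt ℝ 2 u z) :
    laplacian u z = Δ u z := by
  have hd : DifferentiableAt ℝ (fderiv ℝ u) z :=
    (hu.fderiv_right (m := 1) (by norm_num)).differentiableAt (by norm_num)
  simp [laplacian, InnerProductSpace.laplacian_eq_iteratedFDeriv_complexPlane,
    iteratedFDeriv_two_apply, fderiv_clm_apply hd (differentiableAt_const _)]

theorem HarmonicOn.harmonicOnNhd {u : ℂ → ℝ} {s : Set ℂ} (hs : IsOpen s)
    (hu : HarmonicOn u s) : InnerProductSpace.HarmonicOnNhd u s := fun z hz =>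
  have hC : ∀ w ∈ s, ContDiffAt ℝ 2 u w := fun w hw => hu.1.contDiffAt (hs.mem_nhds hw)
  ⟨hC z hz, eventually_of_mem (hs.mem_nhds hz) fun w hw => by
    rw [← laplacian_eq_of_contDiffAt (hC w hw)]; exact hu.2 w hw⟩

theorem HarmonicOn.exists_differentiable_re_eq {u : ℂ → ℝ} (hu : HarmonicOn u univ) :
    ∃ F : ℂ → ℂ, Differentiable ℂ F ∧ ∀ z, (F z).re = u z := by
  obtain ⟨F, hF, hFu⟩ := (hu.harmonicOnNhd isOpen_univ).exists_analyticOnNhd_univ_re_eq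
  exact ⟨F, differentiableOn_univ.1 hF.differentiableOn, congrFun hFu⟩

theorem exists_forall_mul_sub_le_pow_three_add (l a : ℝ) :
    ∃ C, ∀ x, a ≤ x → l * (x - a) ≤ x ^ 3 + C := by
  refine ⟨l ^ 2 + |l| * |a| + |a| ^ 3 + 1, fun x hx => ?_⟩
  have hl : l * (x - a) ≤ |l| * (x - a) :=
    mul_le_mul_of_nonneg_right (le_abs_self l) (by linarith)
  have hla : |l| * -a ≤ |l| * |a| := mul_le_mul_of_nonneg_left (neg_le_abs a) (abs_nonneg l)
  rcases le_or_gt 0 x with hx0 | hx0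
  · nlinarith [sq_nonneg (|l| - x), mul_nonneg (sq_nonneg (x - 1)) (by linarith : 0 ≤ x + 1),
      pow_nonneg hx0 3, pow_nonneg (abs_nonneg a) 3, sq_abs l]
  · have : (-|a|) ^ 3 ≤ x ^ 3 := (Odd.pow_le_pow (by decide)).2 ((neg_abs_le a).trans hx)
    nlinarith [mul_nonneg (abs_nonneg l) (neg_nonneg.2 hx0.le)]

theorem re_nonneg_of_frontier_of_bddBelow {H : ℂ → ℂ} {U : Set ℂ} {c : ℂ} {ρ C : ℝ}
    (hρ : 0 < ρ) (hUc : Disjoint U (ball c ρ)) (hH : DifferentiableOn ℂ H (closure U))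
    (hbdd : ∀ w ∈ closure U, -C ≤ (H w).re) (hfr : ∀ w ∈ frontier U, 0 ≤ (H w).re)
    {z : ℂ} (hz : z ∈ U) : 0 ≤ (H z).re := by
  have hρ_le : ∀ w ∈ closure U, ρ ≤ dist w c := fun w hw =>
    not_lt.1 fun h => (hUc.closure_left isOpen_ball).ne_of_mem hw (mem_ball.2 h) rfl
  by_contra! hneg
  -- `n` is taken so large that `-n Re H z` beats `log (|z - c| / ρ)`, the largest value the
  -- bound `‖g z‖ ≤ 1 / ρ` below allows; `K` makes that bound hold on the outer circle.
  obtain ⟨n, hn⟩ := exists_nat_gt (Real.log (dist z c / ρ) / -(H z).re)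
  rw [div_lt_iff₀ (by linarith)] at hn
  set K := max (ρ * Real.exp (n * C)) (dist z c + 1)
  set V := U ∩ ball c K
  set g : ℂ → ℂ := fun w => exp (-(n * H w)) / (w - c)
  have hV : closure V ⊆ closure U := closure_mono inter_subset_left
  have hg_norm : ∀ w ∈ closure U, ‖g w‖ ≤ 1 / ρ ↔ Real.exp (-(n * (H w).re)) * ρ ≤ dist w c := by
    intro w hw
    rw [norm_div, norm_exp, ← dist_eq, div_le_div_iff₀ (hρ.trans_le (hρ_le w hw)) hρ, one_mul]
    simp
  have hg_diff : DiffContOnCl ℂ g V := by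
    refine DifferentiableOn.diffContOnCl ?_
    refine (((hH.mono hV).const_mul _).neg.cexp).div (differentiableOn_id.sub_const c) ?_
    intro w hw
    exact sub_ne_zero.2 (dist_pos.1 (hρ.trans_le (hρ_le w (hV hw))))
  have hg_frontier : ∀ w ∈ frontier V, ‖g w‖ ≤ 1 / ρ := by
    intro w hw
    rcases frontier_inter_subset U (ball c K) hw with ⟨hwU, -⟩ | ⟨hwU, hwK⟩
    · rw [hg_norm w hwU.1]
      have : -(n * (H w).re) ≤ 0 := neg_nonpos.2 (mul_nonneg n.cast_nonneg (hfr w hwU))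
      calc Real.exp (-(n * (H w).re)) * ρ ≤ 1 * ρ := by gcongr; exact Real.exp_le_one_iff.2 this
        _ ≤ dist w c := by rw [one_mul]; exact hρ_le w hwU.1
    · rw [hg_norm w hwU, frontier_ball_subset_sphere hwK]
      calc Real.exp (-(n * (H w).re)) * ρ ≤ Real.exp (n * C) * ρ := by
            gcongr; nlinarith [hbdd w hwU, n.cast_nonneg (α := ℝ)]
        _ ≤ K := by rw [mul_comm]; exact le_max_left _ _
  have hgz := Complex.norm_le_of_forall_mem_frontier_norm_le
    (isBounded_ball.subset inter_subset_right) hg_diff hg_frontier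
    (subset_closure ⟨hz, mem_ball.2 (lt_max_of_lt_right (lt_add_one _))⟩)
  rw [hg_norm z (subset_closure hz), ← le_div_iff₀ hρ,
    ← Real.le_log_iff_exp_le (div_pos (hρ.trans_le (hρ_le z (subset_closure hz))) hρ)] at hgz
  linarith

theorem re_eq_of_re_pow_three_lt_re {F G : ℂ → ℂ} (hF : Differentiable ℂ F)
    (hG : Differentiable ℂ G) (hFG : ∀ z, (F z).re ^ 3 < (G z).re) (z w : ℂ) :
    (F z).re = (F w).re := by
  have hu : Continuous fun z => (F z).re := continuous_re.comp hF.continuous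
  suffices h : ∀ c p, ¬ (F c).re < (F p).re from
    le_antisymm (not_lt.1 (h w z)) (not_lt.1 (h z w))
  intro c p hcp
  obtain ⟨a, hca, hap⟩ := exists_between hcp
  obtain ⟨ρ, hρ, hball⟩ := Metric.isOpen_iff.1 (isOpen_lt hu continuous_const) c hca
  have hUc : Disjoint {z | a < (F z).re} (ball c ρ) :=
    Set.disjoint_right.2 fun z hz (hzU : a < (F z).re) => (hball hz : (F z).re < a).not_gt hzU
  have key : ∀ n : ℕ, n * ((F p).re - a) ≤ (G p).re - a ^ 3 := by
    intro n
    set H : ℂ → ℂ := fun z => G z - n * (F z - a) - ((a ^ 3 : ℝ) : ℂ)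
    have hH : ∀ z, (H z).re = (G z).re - n * ((F z).re - a) - a ^ 3 := fun z => by
      simp [H, -ofReal_pow]
    obtain ⟨C, hC⟩ := exists_forall_mul_sub_le_pow_three_add n a
    have := re_nonneg_of_frontier_of_bddBelow (H := H) (C := C + a ^ 3) hρ hUc (by fun_prop)
      (fun z hz => ?_) (fun z hz => ?_) hap
    · rw [hH] at this; linarith
    · have := hC _ (closure_lt_subset_le continuous_const hu hz)
      rw [hH]
      linarith [hFG z]
    · have hza : (F z).re = a := (frontier_lt_subset_eq continuous_const hu hz).symm
      rw [hH, hza]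
      linarith [hza ▸ hFG z]
  obtain ⟨n, hn⟩ := exists_nat_gt (((G p).re - a ^ 3) / ((F p).re - a))
  rw [div_lt_iff₀ (by linarith)] at hn
  linarith [key n]

theorem re_eq_of_forall_lt_re {G : ℂ → ℂ} (hG : Differentiable ℂ G) {m : ℝ}
    (hm : ∀ z, m < (G z).re) (z w : ℂ) : (G z).re = (G w).re := by
  have := re_eq_of_re_pow_three_lt_re (F := fun z => m - G z) (G := fun z => G z - m)
    (by fun_prop) (by fun_prop) (fun z => ?_) z w
  · simpa using this
  · have h := sub_pos.2 (hm z)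
    simp only [sub_re, ofReal_re]
    nlinarith [pow_pos h 3]

/-- Every harmonic map `f = (u, v) : ℂ → ℝ²` with image in
`A_{3,-1,1} = {(x₁, x₂) : x₂ > x₁³}` is constant (Brody hyperbolicity of the tube
domain over this base). -/
theorem brody_A3 (f : ℂ → ℝ × ℝ)
    (hharm : HarmonicMapOn f (Set.univ : Set ℂ))
    (himage : ∀ z : ℂ, (f z).1 ^ 3 < (f z).2) :
    ∀ z w : ℂ, f z = f w := by
  obtain ⟨F, hF, hFu⟩ := hharm.1.exists_differentiable_re_eq
  obtain ⟨G, hG, hGv⟩ := hharm.2.exists_differentiable_re_eq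
  have hFG : ∀ z, (F z).re ^ 3 < (G z).re := fun z => by rw [hFu, hGv]; exact himage z
  have hu := re_eq_of_re_pow_three_lt_re hF hG hFG
  have hv := re_eq_of_forall_lt_re hG (m := (F 0).re ^ 3) fun z => hu z 0 ▸ hFG z
  intro z w
  simp only [hFu, hGv] at hu hv
  exact Prod.ext (hu z w) (hv z w)
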